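/- arXiv:2410.04952 — 5 statements merged into one kernel-verified Lean document; each statement's English description precedes it below -/
import Mathlib

section
/- Let q > 1 and a be real numbers with |a| ≤ 2√q (the Hasse bound). Define β by β_{-1} = 0, β_0 = 1, and (q^n - 1)·β_n = (q^n + q^{n-1} - a)·β_{n-1} - (q^{n-1} - q)·β_{n-2} for n ≥ 1. Then for all n ≥ 0, β_n > 0. -/
/-!
Rewriting the recursion as
`(qⁿ - 1)(βₙ - βₙ₋₁) = (q + 1 - a) βₙ₋₁ + (qⁿ⁻¹ - q)(βₙ₋₁ - βₙ₋₂)`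
shows that `(βₙ)ₙ≥₁` is strictly increasing as long as it is positive, because the Hasse bound
gives `a ≤ 2√q < q + 1` and `qⁿ⁻¹ - q ≥ 0` for `n ≥ 2` (the factor vanishes for `n = 1`, where
`β₁ < β₀` may happen). Since `β₁ = (q + 1 - a)/(q - 1) > 0`, induction gives `βₙ ≥ β₁ > 0`.
-/

lemma two_mul_sqrt_lt_add_one {q : ℝ} (hq : 1 < q) : 2 * √q < q + 1 := by
  have h1 : 1 < √q := Real.lt_sqrt_of_sq_lt (by simpa using hq)
  nlinarith [Real.sq_sqrt (zero_le_one.trans hq.le)]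

namespace BetaRecursion

variable {q a : ℝ} {b : ℕ → ℝ}

lemma mul_sub_eq
    (hrec : ∀ n : ℕ, (q ^ (n + 2) - 1) * b (n + 2) =
      (q ^ (n + 2) + q ^ (n + 1) - a) * b (n + 1) - (q ^ (n + 1) - q) * b n) (n : ℕ) :
    (q ^ (n + 2) - 1) * (b (n + 2) - b (n + 1)) =
      (q + 1 - a) * b (n + 1) + (q ^ (n + 1) - q) * (b (n + 1) - b n) := by
  linear_combination hrec n

lemma lt_succ_of_pos (hq : 1 < q) (ha : a < q + 1)
    (hrec : ∀ n : ℕ, (q ^ (n + 2) - 1) * b (n + 2) =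
      (q ^ (n + 2) + q ^ (n + 1) - a) * b (n + 1) - (q ^ (n + 1) - q) * b n)
    {n : ℕ} (hpos : 0 < b (n + 1)) (hprev : 0 ≤ (q ^ (n + 1) - q) * (b (n + 1) - b n)) :
    b (n + 1) < b (n + 2) := by
  have hcoef : 0 < q ^ (n + 2) - 1 := sub_pos.mpr (one_lt_pow₀ hq (by omega))
  have hprod : 0 < (q ^ (n + 2) - 1) * (b (n + 2) - b (n + 1)) := by
    rw [mul_sub_eq hrec]
    exact add_pos_of_pos_of_nonneg (mul_pos (by linarith) hpos) hprev
  exact sub_pos.mp (pos_of_mul_pos_right hprod hcoef.le)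

lemma pos_and_lt_succ (hq : 1 < q) (ha : a < q + 1) (hb₁ : 0 < b 1)
    (hrec : ∀ n : ℕ, (q ^ (n + 2) - 1) * b (n + 2) =
      (q ^ (n + 2) + q ^ (n + 1) - a) * b (n + 1) - (q ^ (n + 1) - q) * b n) :
    ∀ n : ℕ, 0 < b (n + 1) ∧ b (n + 1) < b (n + 2)
  | 0 => ⟨hb₁, lt_succ_of_pos hq ha hrec hb₁ (by simp)⟩
  | n + 1 => by
    obtain ⟨hpos, hlt⟩ := pos_and_lt_succ hq ha hb₁ hrec n
    have hq_le : q ≤ q ^ (n + 2) := le_self_pow₀ hq.le (by omega)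
    refine ⟨hpos.trans hlt, lt_succ_of_pos hq ha hrec (hpos.trans hlt) ?_⟩
    exact mul_nonneg (sub_nonneg.mpr hq_le) (sub_nonneg.mpr hlt.le)

end BetaRecursion

theorem beta_pos
    (q a : ℝ) (hq : 1 < q) (hHasse : |a| ≤ 2 * Real.sqrt q)
    (β : ℤ → ℝ)
    (hβm1 : β (-1) = 0) (hβ0 : β 0 = 1)
    (hrec : ∀ n : ℕ, 1 ≤ n →
      (q ^ n - 1) * β (n : ℤ) =
        (q ^ n + q ^ (n - 1) - a) * β ((n : ℤ) - 1) - (q ^ (n - 1) - q) * β ((n : ℤ) - 2)) :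
    ∀ n : ℕ, 0 < β (n : ℤ) := by
  have ha : a < q + 1 := ((le_abs_self a).trans hHasse).trans_lt (two_mul_sqrt_lt_add_one hq)
  have hβ₁ : 0 < β 1 := by
    have h := hrec 1 le_rfl
    norm_num [hβ0, hβm1] at h
    have hq₁ : 0 < q - 1 := sub_pos.mpr hq
    nlinarith
  have hrec' : ∀ n : ℕ, (q ^ (n + 2) - 1) * β ↑(n + 2) =
      (q ^ (n + 2) + q ^ (n + 1) - a) * β ↑(n + 1) - (q ^ (n + 1) - q) * β ↑n := by
    intro n
    convert hrec (n + 2) (by omega) using 3 <;> push_cast <;> ring_nf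
  intro n
  cases n with
  | zero => simp [hβ0]
  | succ n =>
    exact_mod_cast (BetaRecursion.pos_and_lt_succ (b := fun n : ℕ => β n) hq ha hβ₁ hrec' n).1
end

section
/- Fix n ≥ 3. There exist constants C > 0 and Q_0 such that for all real q ≥ Q_0 and all real a with |a| ≤ 2√q, the quantity a_n defined by the recursion a_m = 1 + a + (-q^m - 2q^{m-1} + a_{m-1}q^{m-1} + q)/(q^{m-1} + 1 - a_{m-1}) for 3 ≤ m ≤ n, with a_2 = a - q + 1, satisfies |a_n - ((5 - n) + (n-1)a - (n-1)q)| ≤ C/√q. -/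
/-!
Write `E m = A m - ((5 - m) + (m - 1) a - (m - 1) q)` for the error. Clearing the denominator
`q ^ m + 1 - A m ≈ q ^ m` of the recursion gives
`E (m + 1) * (q ^ m + 1 - A m) = q + O(m² q²) + E m * O(q ^ m)`,
so `|E (m + 1)| ≤ 4 |E m| + O(m² / q)` once `q` is large. The approximation is off by `2` at
`m = 2`, so the induction starts from the exact value `E 3 = a (a + 1 - 3q) / (q² + q - a)`,
which is `O(1 / √q)` because `|a| ≤ 2√q`. The constants may grow with `n`, so the existential
statement itself is proved by induction on `n`.
-/

noncomputable def nextA (q a : ℝ) (m : ℕ) (x : ℝ) : ℝ :=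
  1 + a + (-q ^ m - 2 * q ^ (m - 1) + x * q ^ (m - 1) + q) / (q ^ (m - 1) + 1 - x)

def leadingTerm (q a : ℝ) (m : ℕ) : ℝ :=
  (5 - (m : ℝ)) + ((m : ℝ) - 1) * a - ((m : ℝ) - 1) * q

theorem nextA_three_sub_leadingTerm {q a : ℝ} (hD : q ^ 2 + q - a ≠ 0) :
    nextA q a 3 (a - q + 1) - leadingTerm q a 3 = a * (a + 1 - 3 * q) / (q ^ 2 + q - a) := by
  have hD' : q ^ 2 + 1 - (a - q + 1) ≠ 0 := by contrapose! hD; linarith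
  rw [eq_div_iff hD]
  simp only [nextA, leadingTerm]
  field_simp
  push_cast
  ring

theorem abs_nextA_three_sub_leadingTerm_le {q a : ℝ} (hq : 9 ≤ q) (ha : |a| ≤ 2 * √q) :
    |nextA q a 3 (a - q + 1) - leadingTerm q a 3| ≤ 8 / √q := by
  set s := √q
  have hs : 3 ≤ s := Real.le_sqrt_of_sq_le (by linarith)
  have hqs : q = s ^ 2 := (Real.sq_sqrt (by linarith)).symm
  obtain ⟨ha₁, ha₂⟩ := abs_le.mp ha
  have hD : q ^ 2 ≤ q ^ 2 + q - a := by nlinarith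
  have hD₀ : 0 < q ^ 2 + q - a := by nlinarith
  have hfactor : |a + 1 - 3 * q| ≤ 4 * q := abs_le.mpr ⟨by nlinarith, by nlinarith⟩
  rw [nextA_three_sub_leadingTerm hD₀.ne', abs_div, abs_of_pos hD₀, abs_mul,
    div_le_div_iff₀ hD₀ (by positivity)]
  calc |a| * |a + 1 - 3 * q| * s ≤ 2 * s * (4 * q) * s := by gcongr
    _ = 8 * q ^ 2 := by rw [hqs]; ring
    _ ≤ 8 * (q ^ 2 + q - a) := by linarith

theorem nextA_succ_sub_leadingTerm_mul (q a x : ℝ) (n : ℕ) (hD : q ^ n + 1 - x ≠ 0) :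
    (nextA q a (n + 1) x - leadingTerm q a (n + 1)) * (q ^ n + 1 - x) =
      q + ((n - 1) * (q - a) + n - 4) * ((n - 1) * (q - a) + q + n - 3) +
        (x - leadingTerm q a n) * (q ^ n - (n - 1) * (q - a) - q + 3 - n) := by
  simp only [nextA, leadingTerm, Nat.add_sub_cancel, pow_succ]
  field_simp
  push_cast
  ring

theorem abs_nextA_succ_sub_leadingTerm_le {n : ℕ} (hn : 3 ≤ n) {q a x : ℝ} (hq : 10 * n ≤ q)
    (ha : |a| ≤ 2 * √q) (hx : |x - leadingTerm q a n| ≤ 1) :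
    |nextA q a (n + 1) x - leadingTerm q a (n + 1)| ≤
      4 * |x - leadingTerm q a n| + 20 * n ^ 2 / √q := by
  set s := √q
  set c : ℝ := (n : ℝ)
  set E := x - leadingTerm q a n
  set E' := nextA q a (n + 1) x - leadingTerm q a (n + 1)
  set u := q ^ n
  have hc : 3 ≤ c := by simp only [c]; exact_mod_cast hn
  have hq₁ : 1 ≤ q := by linarith
  have hqs : s ^ 2 = q := Real.sq_sqrt (by linarith)
  have hs₂ : 2 ≤ s := Real.le_sqrt_of_sq_le (by linarith)
  have hsq : 2 * s ≤ q := by nlinarith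
  have hq₂ : q ^ 2 ≤ u := pow_le_pow_right₀ hq₁ (by omega)
  have hq₃ : q ^ 3 ≤ u := pow_le_pow_right₀ hq₁ hn
  obtain ⟨ha₁, ha₂⟩ := abs_le.mp ha
  obtain ⟨hE₁, hE₂⟩ := abs_le.mp hx
  have hct₀ : 0 ≤ (c - 1) * (q - a) := mul_nonneg (by linarith) (by linarith)
  have hct : (c - 1) * (q - a) ≤ c * (2 * q) :=
    mul_le_mul (by linarith) (by linarith) (by linarith) (by linarith)
  have hcq : 3 * q ≤ c * q := by gcongr
  have hcq₂ : c * q ≤ q ^ 2 := by nlinarith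
  have hx_eq : x = 5 - c - (c - 1) * (q - a) + E := by simp only [E, leadingTerm]; ring
  have hD : u / 2 ≤ u + 1 - x := by linarith
  have hD₀ : 0 < u + 1 - x := by linarith
  have hF₁ : |(c - 1) * (q - a) + c - 4| ≤ 3 * c * q := abs_le.mpr ⟨by linarith, by linarith⟩
  have hF₂ : |(c - 1) * (q - a) + q + c - 3| ≤ 3 * c * q := abs_le.mpr ⟨by linarith, by linarith⟩
  have hR : |u - (c - 1) * (q - a) - q + 3 - c| ≤ 2 * u := abs_le.mpr ⟨by linarith, by linarith⟩
  have key : |E'| * (u / 2) ≤ 10 * c ^ 2 * q ^ 2 + 2 * u * |E| := calc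
    |E'| * (u / 2) ≤ |E'| * (u + 1 - x) := by gcongr
    _ = |q + ((c - 1) * (q - a) + c - 4) * ((c - 1) * (q - a) + q + c - 3) +
          E * (u - (c - 1) * (q - a) - q + 3 - c)| := by
      rw [← abs_of_pos hD₀, ← abs_mul, nextA_succ_sub_leadingTerm_mul q a x n hD₀.ne']
    _ ≤ q + 3 * c * q * (3 * c * q) + |E| * (2 * u) := by
      refine (abs_add_three _ _ _).trans ?_
      rw [abs_of_pos (by positivity : 0 < q), abs_mul, abs_mul]
      gcongr
    _ ≤ 10 * c ^ 2 * q ^ 2 + 2 * u * |E| := by nlinarith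
  have hqu : q ^ 2 * s ≤ u := calc
    q ^ 2 * s ≤ q ^ 2 * q := by gcongr; linarith
    _ = q ^ 3 := by ring
    _ ≤ u := hq₃
  have hu₀ : 0 < u := by positivity
  rw [← sub_le_iff_le_add', le_div_iff₀ (by positivity)]
  refine le_of_mul_le_mul_right ?_ hu₀
  calc (|E'| - 4 * |E|) * s * u = ((|E'| - 4 * |E|) * u) * s := by ring
    _ ≤ (20 * c ^ 2 * q ^ 2) * s := mul_le_mul_of_nonneg_right (by linarith) (by positivity)
    _ ≤ 20 * c ^ 2 * u := by rw [mul_assoc]; gcongr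

theorem a_n_asymptotic (n : ℕ) (hn : 3 ≤ n) :
    ∃ C > (0 : ℝ), ∃ Q₀ : ℝ, ∀ q a : ℝ, Q₀ ≤ q → |a| ≤ 2 * Real.sqrt q →
      ∀ A : ℕ → ℝ,
        A 2 = a - q + 1 →
        (∀ m : ℕ, 3 ≤ m → m ≤ n →
          A m = 1 + a +
            (-q ^ m - 2 * q ^ (m - 1) + A (m - 1) * q ^ (m - 1) + q) /
              (q ^ (m - 1) + 1 - A (m - 1))) →
        |A n - ((5 - (n : ℝ)) + ((n : ℝ) - 1) * a - ((n : ℝ) - 1) * q)| ≤ C / Real.sqrt q := by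
  induction n, hn using Nat.le_induction with
  | base =>
    refine ⟨8, by norm_num, 9, fun q a hq ha A hA₂ hrec => ?_⟩
    have hA₃ : A 3 = nextA q a 3 (A 2) := hrec 3 le_rfl le_rfl
    rw [hA₃, hA₂]
    exact abs_nextA_three_sub_leadingTerm_le hq ha
  | succ n hn ih =>
    obtain ⟨C, hC, Q₀, hQ₀⟩ := ih
    refine ⟨4 * C + 20 * n ^ 2, by positivity, max Q₀ (max (C ^ 2) (10 * n)),
      fun q a hq ha A hA₂ hrec => ?_⟩
    obtain ⟨hqQ₀, hqC, hqn⟩ : Q₀ ≤ q ∧ C ^ 2 ≤ q ∧ 10 * n ≤ q := by simpa using hq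
    have hE : |A n - leadingTerm q a n| ≤ C / √q :=
      hQ₀ q a hqQ₀ ha A hA₂ fun m hm hmn => hrec m hm (hmn.trans n.le_succ)
    have hE₁ : C / √q ≤ 1 :=
      div_le_one_of_le₀ (Real.le_sqrt_of_sq_le hqC) (Real.sqrt_nonneg q)
    have hA : A (n + 1) = nextA q a (n + 1) (A n) := hrec (n + 1) (by omega) le_rfl
    calc |A (n + 1) - leadingTerm q a (n + 1)|
        ≤ 4 * |A n - leadingTerm q a n| + 20 * n ^ 2 / √q :=
          hA ▸ abs_nextA_succ_sub_leadingTerm_le hn hqn ha (hE.trans hE₁)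
      _ ≤ 4 * (C / √q) + 20 * n ^ 2 / √q := by gcongr
      _ = (4 * C + 20 * n ^ 2) / √q := by ring
end

section
/- Fix n ≥ 3. Let (p_k) be a sequence of reals with p_k ≥ 2 and p_k → ∞, and (a_k) reals with |a_k| ≤ 2√(p_k). Suppose a_{n,k} satisfies |a_{n,k} - ((5-n) + (n-1)a_k - (n-1)p_k)| ≤ C/√(p_k) for a constant C, and |a_{n,k}| ≤ 2√(p_k^n). Define θ_k := arccos(a_{n,k}/(2√(p_k^n))) and Δ_k := (√(p_k^{n-1})/(n-1))·(π/2 - θ_k) + (1/2)(√(p_k) + (n-5)/((n-1)√(p_k))). Then Δ_k - a_k/(2√(p_k)) → 0 as k → ∞. -/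
/-! With `s = √q` and `x = a_n / (2 s^n)` we have `π/2 - θ = arcsin x`, and the definition of `Δ`
is arranged so that replacing `arcsin x` by `x` and `a_n` by its main term
`(5 - n) + (n - 1) a - (n - 1) q` gives exactly `a / (2 s)`. Hence `Δ - a / (2 s)` is the sum of
`(a_n - main term) / (2 (n - 1) s) = O(1/q)` and `s^(n-1) (arcsin x - x) / (n - 1)`. By the
Hasse bound `a_n = O(q)`, so `|x| = O(s^(2-n))`; together with `|arcsin x - x| ≤ |x|^3` this makes
the second term `O(1/s)` for `n ≥ 3`. -/

open Filter Real

namespace Real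

theorem abs_arcsin_sub_self_le {x : ℝ} (hx : |x| ≤ 1) : |arcsin x - x| ≤ |x| ^ 3 := by
  set y := arcsin x
  have hsin : sin y = x := sin_arcsin (neg_le_of_abs_le hx) (le_of_abs_le hx)
  have hcube : |y - x| ≤ |y| ^ 3 / 6 := by simpa [hsin] using abs_sub_sin_le y
  have hy_sq : |y| ^ 2 ≤ 5 / 2 := by
    have hy : |y| ≤ π / 2 := abs_le.2 ⟨neg_pi_div_two_le_arcsin x, arcsin_le_pi_div_two x⟩
    nlinarith [pi_lt_d2, abs_nonneg y]
  -- `|y - x| ≤ |y|^3 / 6 ≤ 5/12 |y|`, hence `|y| ≤ 12/7 |x|`.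
  have hy_le : |y| ≤ 12 / 7 * |x| := by
    have := abs_sub_abs_le_abs_sub y x
    nlinarith [abs_nonneg y]
  calc |y - x| ≤ |y| ^ 3 / 6 := hcube
    _ ≤ (12 / 7 * |x|) ^ 3 / 6 := by gcongr
    _ ≤ |x| ^ 3 := by nlinarith [pow_nonneg (abs_nonneg x) 3]

theorem sqrt_pow_eq_pow_sqrt {x : ℝ} (hx : 0 ≤ x) (n : ℕ) : √(x ^ n) = √x ^ n := by
  rw [← sq_sqrt hx, ← pow_mul, mul_comm, pow_mul, sqrt_sq (by positivity), sq_sqrt hx]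

end Real

noncomputable def mainTerm (n : ℕ) (q a : ℝ) : ℝ :=
  (5 - (n : ℝ)) + ((n : ℝ) - 1) * a - ((n : ℝ) - 1) * q

noncomputable def bigDelta (n : ℕ) (q A : ℝ) : ℝ :=
  √(q ^ (n - 1)) / ((n : ℝ) - 1) * (π / 2 - arccos (A / (2 * √(q ^ n))))
    + 1 / 2 * (√q + ((n : ℝ) - 5) / (((n : ℝ) - 1) * √q))

theorem abs_le_of_abs_sub_mainTerm_le {n : ℕ} (hn : 1 ≤ n) {q a A : ℝ} (hq : 1 ≤ q)
    (ha : |a| ≤ 2 * √q) (hA : |A - mainTerm n q a| ≤ 1) :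
    |A| ≤ (|5 - (n : ℝ)| + 3 * ((n : ℝ) - 1) + 1) * q := by
  have hn' : (0 : ℝ) ≤ n - 1 := by
    rw [sub_nonneg]; exact_mod_cast hn
  have ha' : |a| ≤ 2 * q := by
    nlinarith [sq_sqrt (zero_le_one.trans hq), one_le_sqrt.2 hq]
  have hmain : |mainTerm n q a| ≤ |5 - (n : ℝ)| + (n - 1) * |a| + (n - 1) * q := by
    have := abs_add_three (5 - (n : ℝ)) ((n - 1) * a) (-((n - 1) * q))
    rw [abs_neg, abs_mul, abs_mul, abs_of_nonneg hn', abs_of_nonneg (zero_le_one.trans hq)] at this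
    simpa [mainTerm, sub_eq_add_neg] using this
  have := abs_sub_abs_le_abs_sub A (mainTerm n q a)
  nlinarith [abs_nonneg (5 - (n : ℝ))]

theorem bigDelta_sub_eq {n : ℕ} (hn : 2 ≤ n) {q : ℝ} (hq : 0 < q) (a A : ℝ) :
    bigDelta n q A - a / (2 * √q) =
      √q ^ (n - 1) * (arcsin (A / (2 * √q ^ n)) - A / (2 * √q ^ n)) / ((n : ℝ) - 1)
        + (A - mainTerm n q a) / (2 * ((n : ℝ) - 1) * √q) := by
  obtain ⟨m, rfl⟩ : ∃ m, n = m + 1 := ⟨n - 1, by omega⟩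
  have hm : (m : ℝ) ≠ 0 := by norm_cast; omega
  have hs : 0 < √q := sqrt_pos.2 hq
  have hsq : q = √q ^ 2 := (sq_sqrt hq.le).symm
  rw [bigDelta, mainTerm, sqrt_pow_eq_pow_sqrt hq.le, sqrt_pow_eq_pow_sqrt hq.le,
    arccos_eq_pi_div_two_sub_arcsin, sub_sub_cancel]
  generalize √q = s at hs hsq ⊢
  generalize arcsin _ = t
  subst hsq
  simp only [Nat.add_sub_cancel, Nat.cast_add, Nat.cast_one, add_sub_cancel_right]
  field_simp
  ring

theorem abs_pow_mul_arcsin_sub_le {n : ℕ} (hn : 3 ≤ n) {s K A : ℝ} (hs : 1 ≤ s) (hK : K ≤ s)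
    (hA : |A| ≤ K * s ^ 2) :
    |s ^ (n - 1) * (arcsin (A / (2 * s ^ n)) - A / (2 * s ^ n))| ≤ K ^ 3 / (8 * s) := by
  have hs0 : 0 < s := by linarith
  have hsm : 0 < s ^ (n - 1) := pow_pos hs0 _
  have hpow : s ^ n = s ^ (n - 1) * s := by rw [← pow_succ, Nat.sub_add_cancel (by omega)]
  have hden : |2 * s ^ n| = 2 * s ^ (n - 1) * s := by
    rw [hpow, abs_of_pos (by positivity)]; ring
  have hsx : s ^ (n - 1) * |A / (2 * s ^ n)| = |A| / (2 * s) := by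
    rw [abs_div, hden]
    field_simp
  have hK0 : 0 ≤ K := nonneg_of_mul_nonneg_left ((abs_nonneg A).trans hA) (by positivity)
  have hx : |A / (2 * s ^ n)| ≤ K / (2 * s) := by
    have h2 : s ^ 2 ≤ s ^ (n - 1) := pow_le_pow_right₀ hs (by omega)
    rw [abs_div, hden, div_le_div_iff₀ (by positivity) (by positivity)]
    nlinarith [mul_le_mul_of_nonneg_left h2 hK0]
  set x := A / (2 * s ^ n)
  have hx1 : |x| ≤ 1 := hx.trans (by rw [div_le_one (by positivity)]; linarith)
  rw [abs_mul, abs_of_pos hsm]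
  calc s ^ (n - 1) * |arcsin x - x| ≤ s ^ (n - 1) * |x| ^ 3 := by
        gcongr; exact abs_arcsin_sub_self_le hx1
    _ = s ^ (n - 1) * |x| * |x| ^ 2 := by ring
    _ ≤ K * s ^ 2 / (2 * s) * (K / (2 * s)) ^ 2 := by
        rw [hsx]
        exact mul_le_mul (by gcongr) (pow_le_pow_left₀ (abs_nonneg x) hx 2) (by positivity)
          (by positivity)
    _ = K ^ 3 / (8 * s) := by field_simp; ring

theorem big_Delta_structure_general
    (n : ℕ) (hn : 3 ≤ n)
    (p a An : ℕ → ℝ)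
    (hp2 : ∀ k, 2 ≤ p k) (hptop : Tendsto p atTop atTop)
    (hHasse : ∀ k, |a k| ≤ 2 * Real.sqrt (p k))
    (C : ℝ)
    (hAn : ∀ k, |An k - ((5 - (n : ℝ)) + ((n : ℝ) - 1) * a k - ((n : ℝ) - 1) * p k)| ≤
      C / Real.sqrt (p k))
    (θ Δ : ℕ → ℝ)
    (hθ : ∀ k, θ k = Real.arccos (An k / (2 * Real.sqrt (p k ^ n))))
    (hΔ : ∀ k, Δ k = (Real.sqrt (p k ^ (n - 1)) / ((n : ℝ) - 1)) * (π / 2 - θ k)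
      + (1 / 2) * (Real.sqrt (p k) + ((n : ℝ) - 5) / (((n : ℝ) - 1) * Real.sqrt (p k)))) :
    Tendsto (fun k => Δ k - a k / (2 * Real.sqrt (p k))) atTop (nhds 0) := by
  have hs : Tendsto (fun k => √(p k)) atTop atTop := tendsto_sqrt_atTop.comp hptop
  have hn1 : (0 : ℝ) < 2 * ((n : ℝ) - 1) := by
    have : (3 : ℝ) ≤ n := by exact_mod_cast hn
    linarith
  have hE : Tendsto (fun k => An k - mainTerm n (p k) (a k)) atTop (nhds 0) :=
    squeeze_zero_norm hAn (tendsto_const_nhds.div_atTop hs)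
  set K := |5 - (n : ℝ)| + 3 * ((n : ℝ) - 1) + 1
  have hK : ∀ᶠ k in atTop, |An k| ≤ K * √(p k) ^ 2 := by
    filter_upwards [hE.eventually (Metric.closedBall_mem_nhds 0 one_pos),
      hptop.eventually_ge_atTop 1] with k hEk hpk
    rw [sq_sqrt (zero_le_one.trans hpk)]
    exact abs_le_of_abs_sub_mainTerm_le (by omega) hpk (hHasse k) (by simpa using hEk)
  have hkey : ∀ k, Δ k - a k / (2 * √(p k)) =
      √(p k) ^ (n - 1) * (arcsin (An k / (2 * √(p k) ^ n)) - An k / (2 * √(p k) ^ n)) / (n - 1)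
        + (An k - mainTerm n (p k) (a k)) / (2 * ((n : ℝ) - 1) * √(p k)) := fun k => by
    rw [← bigDelta_sub_eq (by omega) (by linarith [hp2 k]), bigDelta, hΔ, hθ]
  have harcsin : Tendsto (fun k => √(p k) ^ (n - 1) *
      (arcsin (An k / (2 * √(p k) ^ n)) - An k / (2 * √(p k) ^ n))) atTop (nhds 0) := by
    have hbound : Tendsto (fun k => K ^ 3 / (8 * √(p k))) atTop (nhds 0) :=
      tendsto_const_nhds.div_atTop (hs.const_mul_atTop (by norm_num))
    refine squeeze_zero_norm' ?_ hbound
    filter_upwards [hK, hs.eventually_ge_atTop 1, hs.eventually_ge_atTop K] with k hAk hs1 hKs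
    exact abs_pow_mul_arcsin_sub_le hn hs1 hKs hAk
  simp_rw [hkey]
  simpa using (harcsin.div_const _).add
    (hE.div_atTop (hs.const_mul_atTop hn1))

theorem big_Delta_structure
    (n : ℕ) (hn : 3 ≤ n)
    (p a An : ℕ → ℝ)
    (hp2 : ∀ k, 2 ≤ p k) (hptop : Tendsto p atTop atTop)
    (hHasse : ∀ k, |a k| ≤ 2 * Real.sqrt (p k))
    (C : ℝ)
    (hAn : ∀ k, |An k - ((5 - (n : ℝ)) + ((n : ℝ) - 1) * a k - ((n : ℝ) - 1) * p k)| ≤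
      C / Real.sqrt (p k))
    (hRH : ∀ k, |An k| ≤ 2 * Real.sqrt (p k ^ n))
    (θ Δ : ℕ → ℝ)
    (hθ : ∀ k, θ k = Real.arccos (An k / (2 * Real.sqrt (p k ^ n))))
    (hΔ : ∀ k, Δ k = (Real.sqrt (p k ^ (n - 1)) / ((n : ℝ) - 1)) * (π / 2 - θ k)
      + (1 / 2) * (Real.sqrt (p k) + ((n : ℝ) - 5) / (((n : ℝ) - 1) * Real.sqrt (p k)))) :
    Tendsto (fun k => Δ k - a k / (2 * Real.sqrt (p k))) atTop (nhds 0) :=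
  big_Delta_structure_general n hn p a An hp2 hptop hHasse C hAn θ Δ hθ hΔ
end

section
/- Let q ≥ 2 and a real with |a| ≤ 2√q. Then the quadratic polynomial 1 - (a - q + 1)T + q²T² has both roots of absolute value 1/q; equivalently, |a - q + 1| ≤ 2q. -/
theorem norm_sq_eq_inv_of_one_sub_mul_add_mul_sq_eq_zero {Q b : ℝ} (hdisc : b ^ 2 ≤ 4 * Q)
    {z : ℂ} (hz : 1 - b * z + Q * z ^ 2 = 0) : ‖z‖ ^ 2 = Q⁻¹ := by
  have hre : 1 - b * z.re + Q * (z.re ^ 2 - z.im ^ 2) = 0 := by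
    simpa [sq] using congrArg Complex.re hz
  have him : z.im * (2 * Q * z.re - b) = 0 := by
    have := congrArg Complex.im hz
    simp [sq] at this
    linear_combination this
  -- Off the real axis `him` forces Re z = b / 2Q; on it, 4Q · (equation) says
  -- (2Q Re z - b)² = b² - 4Q ≤ 0.
  have hvertex : 2 * Q * z.re = b := by
    rcases mul_eq_zero.mp him with hreal | hvertex
    · rw [hreal] at hre
      nlinarith [sq_nonneg (2 * Q * z.re - b)]
    · linarith
  rw [Complex.sq_norm, Complex.normSq_apply]
  refine eq_inv_of_mul_eq_one_left ?_
  linear_combination z.re * hvertex - hre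

theorem abs_sub_add_one_le_two_mul_of_abs_le_two_mul_sqrt {q a : ℝ} (hq : 1 ≤ q)
    (ha : |a| ≤ 2 * √q) : |a - q + 1| ≤ 2 * q := by
  have hsq : √q ^ 2 = q := Real.sq_sqrt (by linarith)
  have hone : 1 ≤ √q := Real.one_le_sqrt.mpr hq
  rw [abs_le] at ha ⊢
  constructor <;> nlinarith [sq_nonneg (√q - 1)]

theorem rank_two_RH
    (q a : ℝ) (hq : 2 ≤ q) (hHasse : |a| ≤ 2 * Real.sqrt q) :
    (∀ z : ℂ, 1 - ((a : ℂ) - q + 1) * z + (q : ℂ) ^ 2 * z ^ 2 = 0 → ‖z‖ = 1 / q) ∧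
      |a - q + 1| ≤ 2 * q := by
  have hb := abs_sub_add_one_le_two_mul_of_abs_le_two_mul_sqrt (by linarith) hHasse
  refine ⟨fun z hz => ?_, hb⟩
  have hdisc : (a - q + 1) ^ 2 ≤ 4 * q ^ 2 := by
    nlinarith [sq_abs (a - q + 1), abs_nonneg (a - q + 1)]
  have hnorm := norm_sq_eq_inv_of_one_sub_mul_add_mul_sq_eq_zero hdisc (z := z)
    (by push_cast; exact hz)
  rw [← inv_pow, ← one_div] at hnorm
  exact (pow_left_inj₀ (norm_nonneg z) (by positivity) two_ne_zero).mp hnorm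
end

section
/- Let q ≥ 2 and a be real with |a| ≤ 2√q, and β the Weng-Zagier sequence (β_{-1}=0, β_0=1, (q^n-1)β_n = (q^n+q^{n-1}-a)β_{n-1} - (q^{n-1}-q)β_{n-2}). Then for all n ≥ 1, the ratio γ_n = β_n/β_{n-1} satisfies γ_n ≥ 1 - (a)/(q^n - 1) whenever a ≥ 0, and in general γ_n > 0. -/
theorem gamma_positivity_and_lower_bound
    (q a : ℝ) (hq : 2 ≤ q) (hHasse : |a| ≤ 2 * Real.sqrt q)
    (β : ℤ → ℝ)
    (hβm1 : β (-1) = 0) (hβ0 : β 0 = 1)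
    (hrec : ∀ n : ℕ, 1 ≤ n →
      (q ^ n - 1) * β (n : ℤ) =
        (q ^ n + q ^ (n - 1) - a) * β ((n : ℤ) - 1) - (q ^ (n - 1) - q) * β ((n : ℤ) - 2)) :
    ∀ n : ℕ, 1 ≤ n →
      (0 ≤ a → β (n : ℤ) / β ((n : ℤ) - 1) ≥ 1 - a / (q ^ n - 1)) ∧
      0 < β (n : ℤ) / β ((n : ℤ) - 1) := by
  have hq0 : (0:ℝ) < q := by linarith
  have hs : Real.sqrt q ^ 2 = q := Real.sq_sqrt hq0.le
  have hs0 : 0 ≤ Real.sqrt q := Real.sqrt_nonneg q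
  have hs1 : 1 < Real.sqrt q := by nlinarith
  have haq : a < q + 1 := by
    have h1 : a ≤ 2 * Real.sqrt q := (abs_le.mp hHasse).2
    nlinarith [mul_pos (sub_pos.mpr hs1) (sub_pos.mpr hs1)]
  have key : ∀ n : ℕ, 1 ≤ n →
      0 < β ((n : ℤ) - 1) ∧
      (q ^ n + 1 - a) * β ((n : ℤ) - 1) ≤ (q ^ n - 1) * β (n : ℤ) := by
    intro n hn
    induction n, hn using Nat.le_induction with
    | base =>
      have h := hrec 1 le_rfl
      norm_num at h ⊢
      rw [hβ0, hβm1] at h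
      rw [hβ0]
      constructor
      · exact one_pos
      · linarith
    | succ n hn ih =>
      obtain ⟨hprev, hineq⟩ := ih
      have hqn : q ≤ q ^ n := le_self_pow₀ (by linarith) (by omega)
      have h1 : 0 < q ^ n - 1 := by linarith
      have h2 : 0 < q ^ n + 1 - a := by linarith
      have hβn : 0 < β (n : ℤ) := by nlinarith [mul_pos h2 hprev]
      have hr := hrec (n + 1) (by omega)
      have e1 : (n + 1) - 1 = n := by omega
      rw [e1] at hr
      push_cast at hr ⊢
      have e2 : ((n : ℤ) + 1) - 1 = (n : ℤ) := by ring
      have e3 : ((n : ℤ) + 1) - 2 = (n : ℤ) - 1 := by ring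
      rw [e2, e3] at hr
      rw [e2]
      constructor
      · exact hβn
      · have hcoef : (q ^ n - q) * β ((n : ℤ) - 1) ≤ (q ^ n + 1 - a) * β ((n : ℤ) - 1) := by
          apply mul_le_mul_of_nonneg_right _ hprev.le
          linarith
        nlinarith [hineq, hcoef]
  intro n hn
  obtain ⟨hprev, hineq⟩ := key n hn
  have hqn : q ≤ q ^ n := le_self_pow₀ (by linarith) (by omega)
  have h1 : 0 < q ^ n - 1 := by linarith
  have h2 : 0 < q ^ n + 1 - a := by linarith
  have hβn : 0 < β (n : ℤ) := by nlinarith [mul_pos h2 hprev]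
  constructor
  · intro _
    rw [ge_iff_le]
    have e : 1 - a / (q ^ n - 1) = (q ^ n - 1 - a) / (q ^ n - 1) := by
      field_simp
    rw [e, div_le_div_iff₀ h1 hprev]
    nlinarith [hineq]
  · exact div_pos hβn hprev
end
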